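/- If F is a continuous CDF, then the distribution of the Kolmogorov–Smirnov statistic D_n = sup_y |F̂ₙ(y) − F(y)| does not depend on F; it equals the distribution of sup_{u∈[0,1]} |Ĝₙ(u) − u| where Ĝₙ is the empirical CDF of n i.i.d. Uniform[0,1] variables. -/

import Mathlib

/-!
Let `F̂` be the empirical CDF of `Y₁, …, Yₙ` and `Ĝ` that of `F(Y₁), …, F(Yₙ)`. Monotonicity of `F`
gives `F̂(y) ≤ Ĝ(u)` when `F(y) ≤ u` and `Ĝ(u) ≤ F̂(y)` when `u < F(y)`; since a continuous CDF takes
every value in `(0, 1)`, these comparisons force `sup_y |F̂(y) - F(y)| = sup_{u ∈ [0,1]} |Ĝ(u) - u|`.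
So `D_n` is a fixed function of `(F(Y₁), …, F(Yₙ))`, measurable because `Ĝ` is right-continuous and
the supremum may be taken over rationals. By the probability integral transform and independence,
this vector has the same law `Uniform[0,1]ⁿ` as `(U₁, …, Uₙ)`.
-/

open MeasureTheory ProbabilityTheory
open scoped Classical

open Set Filter Topology

lemma iSup_Icc_eq_iSup_rat_of_continuousWithinAt_Ici {φ : ℝ → ℝ}
    (hφ : ∀ t, ContinuousWithinAt φ (Ici t) t)
    (hbdd : BddAbove (range fun u : Icc (0 : ℝ) 1 => φ u)) :
    ⨆ u : Icc (0 : ℝ) 1, φ u = ⨆ q : {q : ℚ // (q : ℝ) ∈ Icc (0 : ℝ) 1}, φ q := by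
  have : Nonempty {q : ℚ // (q : ℝ) ∈ Icc (0 : ℝ) 1} := ⟨⟨0, by simp⟩⟩
  have hbdd_rat : BddAbove (range fun q : {q : ℚ // (q : ℝ) ∈ Icc (0 : ℝ) 1} => φ q) :=
    hbdd.mono <| by rintro _ ⟨q, rfl⟩; exact ⟨⟨q, q.2⟩, rfl⟩
  set M := ⨆ q : {q : ℚ // (q : ℝ) ∈ Icc (0 : ℝ) 1}, φ q
  have hle_rat {q : ℚ} (hq : (q : ℝ) ∈ Icc (0 : ℝ) 1) : φ q ≤ M :=
    le_ciSup hbdd_rat ⟨q, hq⟩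
  refine le_antisymm (ciSup_le fun ⟨u, hu⟩ => ?_)
    (ciSup_le fun q => le_ciSup hbdd ⟨q, q.2⟩)
  rcases hu.2.eq_or_lt with rfl | hu1
  · exact_mod_cast hle_rat (q := 1) (by simp)
  set S := Ioo u 1 ∩ range ((↑) : ℚ → ℝ)
  have hS : u ∈ closure S := by
    have h := closure_mono <|
      Rat.denseRange_cast.open_subset_closure_inter (isOpen_Ioo (a := u) (b := 1))
    rw [closure_closure, closure_Ioo hu1.ne] at h
    exact h ⟨le_rfl, hu1.le⟩
  have hφS : φ '' S ⊆ Iic M := by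
    rintro _ ⟨_, ⟨hq, q, rfl⟩, rfl⟩
    exact hle_rat ⟨hu.1.trans hq.1.le, hq.2.le⟩
  exact isClosed_Iic.closure_subset_iff.2 hφS
    (((hφ u).mono fun _ hs => hs.1.1.le).mem_closure_image hS)

section EmpiricalCDF

variable {n : ℕ}

noncomputable def empiricalCDF (x : Fin n → ℝ) (t : ℝ) : ℝ :=
  (∑ i, if x i ≤ t then (1 : ℝ) else 0) / n

lemma empiricalCDF_nonneg (x : Fin n → ℝ) (t : ℝ) : 0 ≤ empiricalCDF x t :=
  div_nonneg (Finset.sum_nonneg fun _ _ => by positivity) n.cast_nonneg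

lemma empiricalCDF_le_one (x : Fin n → ℝ) (t : ℝ) : empiricalCDF x t ≤ 1 := by
  refine div_le_one_of_le₀ ?_ n.cast_nonneg
  calc (∑ i, if x i ≤ t then (1 : ℝ) else 0) ≤ ∑ _i : Fin n, (1 : ℝ) :=
        Finset.sum_le_sum fun i _ => by split_ifs <;> norm_num
    _ = n := by simp

lemma empiricalCDF_le_empiricalCDF {x x' : Fin n → ℝ} {s t : ℝ}
    (h : ∀ i, x i ≤ s → x' i ≤ t) : empiricalCDF x s ≤ empiricalCDF x' t := by
  refine div_le_div_of_nonneg_right (Finset.sum_le_sum fun i _ => ?_) n.cast_nonneg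
  by_cases hi : x i ≤ s
  · simp [hi, h i hi]
  · simp only [hi, if_false]; positivity

lemma empiricalCDF_le_empiricalCDF_comp {F : ℝ → ℝ} (hF : Monotone F) (x : Fin n → ℝ)
    {y u : ℝ} (h : F y ≤ u) : empiricalCDF x y ≤ empiricalCDF (F ∘ x) u :=
  empiricalCDF_le_empiricalCDF fun _ hi => (hF hi).trans h

lemma empiricalCDF_comp_le_empiricalCDF {F : ℝ → ℝ} (hF : Monotone F) (x : Fin n → ℝ)
    {y u : ℝ} (h : u < F y) : empiricalCDF (F ∘ x) u ≤ empiricalCDF x y :=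
  empiricalCDF_le_empiricalCDF fun _ hi => (hF.reflect_lt (hi.trans_lt h)).le

lemma abs_empiricalCDF_sub_le_one (x : Fin n → ℝ) (t : ℝ) {c : ℝ} (hc : c ∈ Icc (0 : ℝ) 1) :
    |empiricalCDF x t - c| ≤ 1 :=
  abs_sub_le_of_nonneg_of_le (empiricalCDF_nonneg x t) (empiricalCDF_le_one x t) hc.1 hc.2

lemma continuousWithinAt_Ici_ite_le (a t : ℝ) :
    ContinuousWithinAt (fun s => if a ≤ s then (1 : ℝ) else 0) (Ici t) t := by
  rcases le_or_gt a t with h | h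
  · exact continuousWithinAt_const.congr (fun s hs => if_pos (h.trans hs)) (if_pos h)
  · refine ((continuousAt_const (y := (0 : ℝ))).congr ?_).continuousWithinAt
    filter_upwards [Iio_mem_nhds h] with s hs
    exact (if_neg (not_le.2 hs)).symm

lemma continuousWithinAt_Ici_empiricalCDF (x : Fin n → ℝ) (t : ℝ) :
    ContinuousWithinAt (empiricalCDF x) (Ici t) t :=
  ContinuousWithinAt.div_const
    (tendsto_finsetSum _ fun i _ => continuousWithinAt_Ici_ite_le (x i) t) _

lemma measurable_empiricalCDF (t : ℝ) : Measurable fun x : Fin n → ℝ => empiricalCDF x t :=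
  Finset.measurable_sum _ (fun i _ => Measurable.ite
    (measurableSet_le (measurable_pi_apply i) measurable_const) measurable_const
    measurable_const) |>.div_const _

end EmpiricalCDF

section UniformKSStatistic

variable {n : ℕ}

noncomputable def uniformKSStatistic (x : Fin n → ℝ) : ℝ :=
  ⨆ u : Icc (0 : ℝ) 1, |empiricalCDF x u - u|

lemma bddAbove_range_abs_empiricalCDF_sub (x : Fin n → ℝ) :
    BddAbove (range fun u : Icc (0 : ℝ) 1 => |empiricalCDF x u - u|) :=
  ⟨1, by rintro _ ⟨u, rfl⟩; exact abs_empiricalCDF_sub_le_one x u u.2⟩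

lemma abs_empiricalCDF_sub_le_uniformKSStatistic (x : Fin n → ℝ) {u : ℝ}
    (hu : u ∈ Icc (0 : ℝ) 1) : |empiricalCDF x u - u| ≤ uniformKSStatistic x :=
  le_ciSup (bddAbove_range_abs_empiricalCDF_sub x) ⟨u, hu⟩

lemma uniformKSStatistic_nonneg (x : Fin n → ℝ) : 0 ≤ uniformKSStatistic x :=
  (abs_nonneg _).trans (abs_empiricalCDF_sub_le_uniformKSStatistic x (u := 0) (by simp))

lemma measurable_uniformKSStatistic : Measurable (uniformKSStatistic (n := n)) := by
  have h : uniformKSStatistic (n := n) =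
      fun x => ⨆ q : {q : ℚ // (q : ℝ) ∈ Icc (0 : ℝ) 1}, |empiricalCDF x q - q| :=
    funext fun x => iSup_Icc_eq_iSup_rat_of_continuousWithinAt_Ici
      (fun t => ((continuousWithinAt_Ici_empiricalCDF x t).sub continuousWithinAt_id).abs)
      (bddAbove_range_abs_empiricalCDF_sub x)
  rw [h]
  exact Measurable.iSup fun q => ((measurable_empiricalCDF q).sub_const _).abs

end UniformKSStatistic

section ContinuousCDF

variable (μ : Measure ℝ)

lemma Ioo_subset_range_cdf (hcont : Continuous (cdf μ)) : Ioo 0 1 ⊆ range (cdf μ) :=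
  fun _ hw => mem_range_of_exists_le_of_exists_ge hcont
    ((tendsto_cdf_atBot μ).eventually (eventually_le_nhds hw.1)).exists
    ((tendsto_cdf_atTop μ).eventually (eventually_ge_nhds hw.2)).exists

lemma measureReal_cdf_le [IsProbabilityMeasure μ] (hcont : Continuous (cdf μ)) {t : ℝ}
    (ht : 0 ≤ t) :
    μ.real {y | cdf μ y ≤ t} = min t 1 := by
  refine le_antisymm (le_min (le_of_forall_gt_imp_ge_of_dense fun w hw => ?_) measureReal_le_one)
    (le_of_forall_lt_imp_le_of_dense fun w hw => ?_)
  · rcases le_or_gt 1 w with hw1 | hw1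
    · exact measureReal_le_one.trans hw1
    obtain ⟨y, rfl⟩ := Ioo_subset_range_cdf μ hcont ⟨ht.trans_lt hw, hw1⟩
    rw [cdf_eq_real]
    exact measureReal_mono fun z hz => ((monotone_cdf μ).reflect_lt (lt_of_le_of_lt hz hw)).le
  · rcases le_or_gt w 0 with hw0 | hw0
    · exact hw0.trans measureReal_nonneg
    obtain ⟨y, rfl⟩ := Ioo_subset_range_cdf μ hcont ⟨hw0, hw.trans_le (min_le_right _ _)⟩
    rw [cdf_eq_real]
    exact measureReal_mono fun z hz => (monotone_cdf μ hz).trans (hw.trans_le (min_le_left _ _)).le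

theorem map_cdf_eq_volume_restrict_Icc [IsProbabilityMeasure μ] (hcont : Continuous (cdf μ)) :
    μ.map (cdf μ) = volume.restrict (Icc 0 1) := by
  have : IsProbabilityMeasure (μ.map (cdf μ)) :=
    Measure.isProbabilityMeasure_map hcont.aemeasurable
  refine Measure.ext_of_Iic _ _ fun t => ?_
  have hvol : volume (Iic t ∩ Icc (0 : ℝ) 1) = ENNReal.ofReal (min t 1) := by
    rw [inter_comm, ← Ici_inter_Iic, inter_assoc, Iic_inter_Iic, Ici_inter_Iic, Real.volume_Icc,
      sub_zero, min_comm]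
  rw [Measure.map_apply hcont.measurable measurableSet_Iic,
    Measure.restrict_apply measurableSet_Iic, hvol]
  rcases lt_or_ge t 0 with ht | ht
  · have hempty : cdf μ ⁻¹' Iic t = ∅ :=
      eq_empty_of_forall_notMem fun y hy => (ht.trans_le (cdf_nonneg μ y)).not_ge hy
    rw [hempty, measure_empty, ENNReal.ofReal_of_nonpos ((min_le_left _ _).trans ht.le)]
  · rw [← ofReal_measureReal, ← measureReal_cdf_le μ hcont ht]
    rfl

end ContinuousCDF

lemma ProbabilityTheory.iIndepFun.map_fun_eq_pi_of_map_eq {Ω ι β : Type*} [MeasurableSpace Ω]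
    [MeasurableSpace β] [Fintype ι] {P : Measure Ω} {X : ι → Ω → β} {ν : Measure β} (hX : ∀ i, Measurable (X i))
    (hind : iIndepFun X P) (hlaw : ∀ i, P.map (X i) = ν) :
    P.map (fun ω i => X i ω) = Measure.pi fun _ => ν := by
  rw [hind.map_fun_eq_pi_map fun i => (hX i).aemeasurable]
  simp_rw [hlaw]

section KolmogorovSmirnov

variable {n : ℕ} (μ : Measure ℝ) (x : Fin n → ℝ)

lemma abs_empiricalCDF_sub_cdf_le_uniformKSStatistic (y : ℝ) :
    |empiricalCDF x y - cdf μ y| ≤ uniformKSStatistic (cdf μ ∘ x) := by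
  have hy : cdf μ y ∈ Icc (0 : ℝ) 1 := ⟨cdf_nonneg μ y, cdf_le_one μ y⟩
  refine abs_sub_le_iff.2 ⟨?_, ?_⟩
  · calc empiricalCDF x y - cdf μ y ≤ empiricalCDF (cdf μ ∘ x) (cdf μ y) - cdf μ y :=
          sub_le_sub_right (empiricalCDF_le_empiricalCDF_comp (monotone_cdf μ) x le_rfl) _
      _ ≤ uniformKSStatistic (cdf μ ∘ x) :=
          (le_abs_self _).trans (abs_empiricalCDF_sub_le_uniformKSStatistic _ hy)
  · rw [sub_le_iff_le_add]
    refine le_of_forall_lt_imp_le_of_dense fun w hw => ?_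
    have := uniformKSStatistic_nonneg (cdf μ ∘ x)
    have := empiricalCDF_nonneg x y
    rcases lt_or_ge w 0 with hw0 | hw0
    · linarith
    have h1 := empiricalCDF_comp_le_empiricalCDF (monotone_cdf μ) x hw
    have h2 := (abs_sub_le_iff.1 (abs_empiricalCDF_sub_le_uniformKSStatistic (cdf μ ∘ x)
      ⟨hw0, (hw.trans_le hy.2).le⟩)).2
    linarith

lemma abs_empiricalCDF_comp_cdf_sub_le_iSup (hcont : Continuous (cdf μ)) {u : ℝ}
    (hu : u ∈ Icc (0 : ℝ) 1) :
    |empiricalCDF (cdf μ ∘ x) u - u| ≤ ⨆ y, |empiricalCDF x y - cdf μ y| := by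
  have hbdd : BddAbove (range fun y => |empiricalCDF x y - cdf μ y|) := ⟨1, by
    rintro _ ⟨y, rfl⟩; exact abs_empiricalCDF_sub_le_one x y ⟨cdf_nonneg μ y, cdf_le_one μ y⟩⟩
  have hterm (y : ℝ) := abs_sub_le_iff.1 (le_ciSup hbdd y)
  have hL := (abs_nonneg _).trans (le_ciSup hbdd 0)
  refine abs_sub_le_iff.2 ⟨?_, ?_⟩
  · rw [sub_le_comm]
    refine le_of_forall_gt_imp_ge_of_dense fun w hw => ?_
    rcases le_or_gt 1 w with hw1 | hw1
    · have := empiricalCDF_le_one (cdf μ ∘ x) u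
      linarith
    obtain ⟨y, rfl⟩ := Ioo_subset_range_cdf μ hcont ⟨hu.1.trans_lt hw, hw1⟩
    have := empiricalCDF_comp_le_empiricalCDF (monotone_cdf μ) x hw
    linarith [(hterm y).1]
  · rw [sub_le_iff_le_add]
    refine le_of_forall_lt_imp_le_of_dense fun w hw => ?_
    rcases le_or_gt w 0 with hw0 | hw0
    · have := empiricalCDF_nonneg (cdf μ ∘ x) u
      linarith
    obtain ⟨y, rfl⟩ := Ioo_subset_range_cdf μ hcont ⟨hw0, hw.trans_le hu.2⟩
    have := empiricalCDF_le_empiricalCDF_comp (monotone_cdf μ) x hw.le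
    linarith [(hterm y).2]

theorem iSup_abs_empiricalCDF_sub_cdf (hcont : Continuous (cdf μ)) :
    ⨆ y, |empiricalCDF x y - cdf μ y| = uniformKSStatistic (cdf μ ∘ x) :=
  le_antisymm (ciSup_le (abs_empiricalCDF_sub_cdf_le_uniformKSStatistic μ x))
    (ciSup_le fun u => abs_empiricalCDF_comp_cdf_sub_le_iSup μ x hcont u.2)

end KolmogorovSmirnov

theorem ks_distribution_free_general {Ω Ω' : Type*} [MeasureSpace Ω] [MeasureSpace Ω']
    [IsProbabilityMeasure (ℙ : Measure Ω)]
    {n : ℕ} (hn : 0 < n)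
    (Y : Fin n → Ω → ℝ) (hYmeas : ∀ i, Measurable (Y i))
    (hYindep : iIndepFun Y ℙ)
    (F : ℝ → ℝ) (hident : ∀ i y, (ℙ {ω | Y i ω ≤ y}).toReal = F y)
    (hcont : Continuous F)
    (U : Fin n → Ω' → ℝ) (hUmeas : ∀ i, Measurable (U i))
    (hUindep : iIndepFun U ℙ)
    (hUunif : ∀ i, Measure.map (U i) ℙ = volume.restrict (Set.Icc (0 : ℝ) 1)) :
    Measure.map
        (fun ω => ⨆ y : ℝ, |(∑ i, if Y i ω ≤ y then (1 : ℝ) else 0) / n - F y|) ℙ =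
      Measure.map
        (fun ω' => ⨆ u : Set.Icc (0 : ℝ) 1,
          |(∑ i, if U i ω' ≤ (u : ℝ) then (1 : ℝ) else 0) / n - (u : ℝ)|) ℙ := by
  have hprob (i : Fin n) : IsProbabilityMeasure (Measure.map (Y i) ℙ) :=
    Measure.isProbabilityMeasure_map (hYmeas i).aemeasurable
  have hcdf (i : Fin n) : cdf (Measure.map (Y i) ℙ) = F := by
    ext y
    rw [cdf_eq_real, map_measureReal_apply (hYmeas i) measurableSet_Iic]
    exact hident i y
  have hFY (i : Fin n) : Measure.map (F ∘ Y i) ℙ = volume.restrict (Icc 0 1) := by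
    rw [← Measure.map_map hcont.measurable (hYmeas i), ← hcdf i]
    exact map_cdf_eq_volume_restrict_Icc _ (hcdf i ▸ hcont)
  have hlhs : (fun ω => ⨆ y : ℝ, |(∑ i, if Y i ω ≤ y then (1 : ℝ) else 0) / n - F y|) =
      uniformKSStatistic ∘ fun ω i => (F ∘ Y i) ω := by
    ext ω
    rw [← hcdf ⟨0, hn⟩]
    exact iSup_abs_empiricalCDF_sub_cdf _ (fun i => Y i ω) (hcdf ⟨0, hn⟩ ▸ hcont)
  have hFYmeas (i : Fin n) : Measurable (F ∘ Y i) := hcont.measurable.comp (hYmeas i)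
  have hFYindep : iIndepFun (fun i => F ∘ Y i) ℙ := hYindep.comp _ fun _ => hcont.measurable
  rw [hlhs, ← Measure.map_map measurable_uniformKSStatistic (measurable_pi_lambda _ hFYmeas),
    hFYindep.map_fun_eq_pi_of_map_eq hFYmeas hFY,
    ← hUindep.map_fun_eq_pi_of_map_eq hUmeas hUunif,
    Measure.map_map measurable_uniformKSStatistic (measurable_pi_lambda _ hUmeas)]
  rfl

/-- Distribution-freeness of the Kolmogorov–Smirnov statistic: if `F` is a continuous CDF,
the distribution of `D_n = sup_y |F̂ₙ(y) − F(y)|` does not depend on `F`; it equals the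
distribution of `sup_{u ∈ [0,1]} |Ĝₙ(u) − u|` where `Ĝₙ` is the empirical CDF of `n` i.i.d.
Uniform[0,1] random variables. -/
theorem ks_distribution_free {Ω Ω' : Type*} [MeasureSpace Ω] [MeasureSpace Ω']
    [IsProbabilityMeasure (ℙ : Measure Ω)] [IsProbabilityMeasure (ℙ : Measure Ω')]
    {n : ℕ} (hn : 0 < n)
    (Y : Fin n → Ω → ℝ) (hYmeas : ∀ i, Measurable (Y i))
    (hYindep : iIndepFun Y ℙ)
    (F : ℝ → ℝ) (hident : ∀ i y, (ℙ {ω | Y i ω ≤ y}).toReal = F y)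
    (hcont : Continuous F)
    (U : Fin n → Ω' → ℝ) (hUmeas : ∀ i, Measurable (U i))
    (hUindep : iIndepFun U ℙ)
    (hUunif : ∀ i, Measure.map (U i) ℙ = volume.restrict (Set.Icc (0 : ℝ) 1)) :
    Measure.map
        (fun ω => ⨆ y : ℝ, |(∑ i, if Y i ω ≤ y then (1 : ℝ) else 0) / n - F y|) ℙ =
      Measure.map
        (fun ω' => ⨆ u : Set.Icc (0 : ℝ) 1,
          |(∑ i, if U i ω' ≤ (u : ℝ) then (1 : ℝ) else 0) / n - (u : ℝ)|) ℙ :=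
  ks_distribution_free_general hn Y hYmeas hYindep F hident hcont U hUmeas hUindep hUunif
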